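/- Fix a time t, a window τ < t, and any fixed (deterministic) strategy π ∈ 𝒞. Then for every δ ∈ (0,1), with probability at least 1 − δ: Σ_f π_f d̂_{f,t} 𝓛_f ≤ E[R_t(π) | ℱ_{t−1}] + D^π_t(u_τ) + H_max √(2 log(1/δ)/τ), where d̂_{f,t} = (1/τ) Σ_{s=t−τ}^{t−1} D_{f,s} and D^π_t(u_τ) = | (1/τ) Σ_{s=t−τ}^{t−1} ( E[R_t(π) | ℱ_{t−1}] − E[R_s(π) | ℱ_{s−1}] ) | is the (uniform-weight) discrepancy of π across the window. -/

import Mathlib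

open MeasureTheory Finset

noncomputable section

/-- The set of coded caching strategies: fractions in `[0,1]` for each file,
subject to the cache size constraint. -/
def cacheSet (N : ℕ) (L : Fin N → ℝ) (Cap : ℝ) : Set (Fin N → ℝ) :=
  {p | (∀ f, 0 ≤ p f ∧ p f ≤ 1) ∧ ∑ f, p f * L f ≤ Cap}

/-- Hit rate of a (possibly random) caching strategy `p` with demands `D`. -/
def hitRate {Ω : Type*} {N : ℕ} (L : Fin N → ℝ) (D : Fin N → Ω → ℝ)
    (p : Ω → Fin N → ℝ) (ω : Ω) : ℝ :=
  ∑ f, D f ω * p ω f * L f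

/-!
Split the window average of the hit rates `R_s` of `q` as `E[R_t | ℱ_{t-1}]`, minus the
discrepancy term, plus `1/τ` times the sum of the martingale differences
`R_s - E[R_s | ℱ_{s-1}]`. These differences lie in `[-H_max, H_max]` and have zero conditional
mean, so the chord bound for `exp` (conditional Hoeffding lemma) bounds each conditional
moment-generating function by `exp (H_max² λ² / 2)`. Multiplying out along the filtration gives
the Azuma–Hoeffding inequality: the sum is sub-Gaussian with parameter `τ H_max²`, and the
Chernoff bound at level `δ` is exactly `τ H_max √(2 log(1/δ) / τ)`.
-/

open ProbabilityTheory Real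
open scoped NNReal

lemma exp_mul_le_cosh_add_div_mul_sinh {x c t : ℝ} (hx : |x| ≤ c) :
    exp (t * x) ≤ cosh (t * c) + x / c * sinh (t * c) := by
  rcases ((abs_nonneg x).trans hx).eq_or_lt with rfl | hc
  · simp [abs_nonpos_iff.1 hx]
  obtain ⟨hxl, hxr⟩ := abs_le.1 hx
  -- `t * x` is the convex combination of `-(t * c)` and `t * c` with these weights
  have hconv := convexOn_exp.2 (Set.mem_univ (-(t * c))) (Set.mem_univ (t * c))
    (div_nonneg (by linarith) (by linarith) : 0 ≤ (c - x) / (2 * c))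
    (div_nonneg (by linarith) (by linarith) : 0 ≤ (c + x) / (2 * c)) (by field_simp; ring)
  have harg : (c - x) / (2 * c) * -(t * c) + (c + x) / (2 * c) * (t * c) = t * x := by
    field_simp; ring
  simp only [smul_eq_mul, harg] at hconv
  refine hconv.trans_eq ?_
  rw [cosh_eq, sinh_eq]; field_simp; ring

section FiniteMeasure

variable {Ω : Type*} {m m₀ : MeasurableSpace Ω} {μ : Measure Ω} [IsFiniteMeasure μ]

lemma abs_sub_condExp_le_of_mem_Icc (hm : m ≤ m₀) {f : Ω → ℝ} {a b : ℝ}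
    (hf : AEStronglyMeasurable f μ) (hab : ∀ᵐ ω ∂μ, f ω ∈ Set.Icc a b) :
    ∀ᵐ ω ∂μ, |f ω - μ[f|m] ω| ≤ b - a := by
  have hfint : Integrable f μ := Integrable.of_mem_Icc a b hf.aemeasurable hab
  have hlow := condExp_mono (m := m) (integrable_const a) hfint (hab.mono fun _ h => h.1)
  have hup := condExp_mono (m := m) hfint (integrable_const b) (hab.mono fun _ h => h.2)
  rw [condExp_const hm] at hlow hup
  filter_upwards [hab, hlow, hup] with ω hω hl hu
  exact abs_sub_le_iff.2 ⟨by linarith [hω.2], by linarith [hω.1]⟩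

lemma condExp_sub_condExp_ae_eq_zero (hm : m ≤ m₀) {f : Ω → ℝ} (hf : Integrable f μ) :
    μ[f - μ[f|m]|m] =ᵐ[μ] 0 := by
  filter_upwards [condExp_sub hf integrable_condExp m] with ω hω
  rw [hω, condExp_of_stronglyMeasurable hm stronglyMeasurable_condExp integrable_condExp,
    Pi.sub_apply, sub_self, Pi.zero_apply]

lemma condExp_exp_mul_le (hm : m ≤ m₀) {Y : Ω → ℝ} {c : ℝ}
    (hY : AEStronglyMeasurable Y μ) (hbd : ∀ᵐ ω ∂μ, |Y ω| ≤ c) (hce : μ[Y|m] =ᵐ[μ] 0)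
    (t : ℝ) :
    μ[fun ω => exp (t * Y ω)|m] ≤ᵐ[μ] fun _ => exp (c ^ 2 * t ^ 2 / 2) := by
  have hYint : Integrable Y μ := Integrable.of_bound hY c (by simpa only [norm_eq_abs] using hbd)
  have hchord : μ[fun ω => exp (t * Y ω)|m]
      ≤ᵐ[μ] μ[fun ω => cosh (t * c) + Y ω / c * sinh (t * c)|m] :=
    condExp_mono (integrable_exp_mul_of_mem_Icc hY.aemeasurable (hbd.mono fun _ => abs_le.1))
      ((integrable_const _).add ((hYint.div_const c).mul_const _))
      (hbd.mono fun _ => exp_mul_le_cosh_add_div_mul_sinh)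
  have hlin : μ[fun ω => cosh (t * c) + Y ω / c * sinh (t * c)|m]
      =ᵐ[μ] fun _ => cosh (t * c) := by
    have hsplit : (fun ω => cosh (t * c) + Y ω / c * sinh (t * c))
        = (fun _ => cosh (t * c)) + (sinh (t * c) / c) • Y := by
      ext ω; simp only [Pi.add_apply, Pi.smul_apply, smul_eq_mul]; ring
    rw [hsplit]
    filter_upwards
      [condExp_add (integrable_const (cosh (t * c))) (hYint.smul (sinh (t * c) / c)) m,
      condExp_smul (μ := μ) (m := m) (sinh (t * c) / c) Y, hce] with ω hadd hsmul hzero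
    simp [hadd, hsmul, hzero, condExp_const hm]
  filter_upwards [hchord, hlin] with ω hle heq
  calc _ ≤ cosh (t * c) := hle.trans heq.le
    _ ≤ exp ((t * c) ^ 2 / 2) := cosh_le_exp_half_sq _
    _ = exp (c ^ 2 * t ^ 2 / 2) := by ring_nf

lemma ProbabilityTheory.HasSubgaussianMGF.add_of_condExp_eq_zero (hm : m ≤ m₀)
    {S Y : Ω → ℝ} {a c : ℝ≥0}
    (hS : HasSubgaussianMGF S a μ) (hSm : Measurable[m] S) (hY : AEStronglyMeasurable Y μ)
    (hbd : ∀ᵐ ω ∂μ, |Y ω| ≤ c) (hce : μ[Y|m] =ᵐ[μ] 0) :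
    HasSubgaussianMGF (S + Y) (a + c ^ 2) μ := by
  have hexp_add (t : ℝ) : (fun ω => exp (t * (S + Y) ω))
      = (fun ω => exp (t * S ω)) * fun ω => exp (t * Y ω) := by
    ext ω; simp only [Pi.add_apply, Pi.mul_apply, mul_add, exp_add]
  have hexpY_int (t : ℝ) : Integrable (fun ω => exp (t * Y ω)) μ :=
    integrable_exp_mul_of_mem_Icc hY.aemeasurable (hbd.mono fun _ => abs_le.1)
  have hprod_int (t : ℝ) : Integrable (fun ω => exp (t * (S + Y) ω)) μ := by
    rw [hexp_add]
    refine (hS.integrable_exp_mul t).mul_bdd (hexpY_int t).1 (c := exp (|t| * c)) ?_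
    filter_upwards [hbd] with ω hω
    rw [norm_of_nonneg (exp_pos _).le, exp_le_exp]
    exact (le_abs_self _).trans ((abs_mul t (Y ω)).trans_le (by gcongr))
  refine ⟨hprod_int, fun t => ?_⟩
  have hSt : StronglyMeasurable[m] fun ω => exp (t * S ω) :=
    (measurable_exp.comp (hSm.const_mul t)).stronglyMeasurable
  have hpull : μ[fun ω => exp (t * (S + Y) ω)|m]
      =ᵐ[μ] fun ω => exp (t * S ω) * μ[fun ω => exp (t * Y ω)|m] ω := by
    rw [hexp_add]
    exact condExp_mul_of_stronglyMeasurable_left hSt (hexp_add t ▸ hprod_int t) (hexpY_int t)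
  calc mgf (S + Y) μ t = ∫ ω, μ[fun ω => exp (t * (S + Y) ω)|m] ω ∂μ :=
        (integral_condExp hm).symm
    _ = ∫ ω, exp (t * S ω) * μ[fun ω => exp (t * Y ω)|m] ω ∂μ := integral_congr_ae hpull
    _ ≤ ∫ ω, exp (t * S ω) * exp (c ^ 2 * t ^ 2 / 2) ∂μ := by
        refine integral_mono_ae (integrable_condExp.congr hpull)
          ((hS.integrable_exp_mul t).mul_const _) ?_
        filter_upwards [condExp_exp_mul_le hm hY hbd hce t] with ω hω
        exact mul_le_mul_of_nonneg_left hω (exp_pos _).le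
    _ = mgf S μ t * exp (c ^ 2 * t ^ 2 / 2) := integral_mul_const _ _
    _ ≤ exp (a * t ^ 2 / 2) * exp (c ^ 2 * t ^ 2 / 2) := by
        gcongr; exact hS.mgf_le t
    _ = exp ((a + c ^ 2 : ℝ≥0) * t ^ 2 / 2) := by rw [← exp_add]; push_cast; ring_nf

end FiniteMeasure

section Probability

variable {Ω : Type*} {m₀ : MeasurableSpace Ω} {μ : Measure Ω} [IsProbabilityMeasure μ]

/- Mathlib's `measure_sum_ge_le_of_hasCondSubgaussianMGF` needs `[StandardBorelSpace Ω]`; this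
version works on any probability space by conditioning through `condExp` only. -/
lemma hasSubgaussianMGF_sum_Ico_of_condExp_eq_zero {F : Filtration ℕ m₀}
    {X : ℕ → Ω → ℝ} {c : ℝ≥0} (hX : ∀ s, Measurable[F s] (X s))
    (hbd : ∀ s, ∀ᵐ ω ∂μ, |X s ω| ≤ c)
    (hce : ∀ s, μ[X s|F (s - 1)] =ᵐ[μ] 0) (a n : ℕ) :
    HasSubgaussianMGF (fun ω => ∑ s ∈ Finset.Ico a (a + n), X s ω) (n * c ^ 2) μ := by
  induction n with
  | zero => simp
  | succ n ih =>
    have hsum : (fun ω => ∑ s ∈ Finset.Ico a (a + (n + 1)), X s ω)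
        = (fun ω => ∑ s ∈ Finset.Ico a (a + n), X s ω) + X (a + n) := by
      ext ω; exact Finset.sum_Ico_succ_top (Nat.le_add_right a n) _
    have hpast : Measurable[F (a + n - 1)] fun ω => ∑ s ∈ Finset.Ico a (a + n), X s ω :=
      Finset.measurable_sum _ fun s hs =>
        (hX s).mono (F.mono (Nat.le_sub_one_of_lt (Finset.mem_Ico.1 hs).2)) le_rfl
    rw [hsum, Nat.cast_succ, add_one_mul]
    exact ih.add_of_condExp_eq_zero (F.le _) hpast
      ((hX _).mono (F.le _) le_rfl).aestronglyMeasurable (hbd _) (hce _)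

lemma ProbabilityTheory.HasSubgaussianMGF.ofReal_one_sub_le_measure_le {X : Ω → ℝ} {c : ℝ≥0}
    (h : HasSubgaussianMGF X c μ) {δ : ℝ} (hδ0 : 0 < δ) (hδ1 : δ ≤ 1) :
    ENNReal.ofReal (1 - δ) ≤ μ {ω | X ω ≤ sqrt (2 * c * log (1 / δ))} := by
  set ε := sqrt (2 * c * log (1 / δ))
  have hlog : 0 ≤ log (1 / δ) := log_nonneg (one_le_one_div hδ0 hδ1)
  suffices htail : μ {ω | ε < X ω} ≤ ENNReal.ofReal δ by
    rw [ENNReal.ofReal_sub _ hδ0.le, ENNReal.ofReal_one, tsub_le_iff_right]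
    calc (1 : ENNReal) = μ ({ω | X ω ≤ ε} ∪ {ω | ε < X ω}) := by
          rw [← measure_univ (μ := μ)]; congr 1; ext ω; simp [le_or_gt]
      _ ≤ _ := (measure_union_le _ _).trans (by gcongr)
  rcases eq_or_ne c 0 with rfl | hc
  · have hX0 := h.ae_eq_zero_of_hasSubgaussianMGF_zero
    refine (measure_mono_null (fun ω hω => ?_) (ae_iff.1 hX0)).trans_le zero_le
    simp only [Set.mem_ofPred_eq, ε, NNReal.coe_zero, mul_zero, zero_mul, sqrt_zero] at hω ⊢
    exact hω.ne'
  have hcpos : (0 : ℝ) < c := by positivity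
  have hbound : μ.real {ω | ε ≤ X ω} ≤ δ := by
    refine (h.measure_ge_le (sqrt_nonneg _)).trans_eq ?_
    rw [sq_sqrt (by positivity), neg_div, mul_div_cancel_left₀ _ (by positivity), one_div,
      log_inv, neg_neg, exp_log hδ0]
  exact (measure_mono fun ω (hω : ε < X ω) => hω.le).trans
    ((ENNReal.le_ofReal_iff_toReal_le (measure_ne_top μ {ω | ε ≤ X ω}) hδ0.le).2 hbound)

end Probability

lemma mul_sum_hitRate {Ω : Type*} {N : ℕ} (L : Fin N → ℝ) (D : Fin N → ℕ → Ω → ℝ)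
    (q : Fin N → ℝ) (I : Finset ℕ) (w : ℝ) (ω : Ω) :
    w * ∑ s ∈ I, hitRate L (fun f => D f s) (fun _ => q) ω
      = ∑ f, q f * (w * ∑ s ∈ I, D f s ω) * L f := by
  simp only [hitRate, Finset.mul_sum, Finset.sum_mul]
  rw [Finset.sum_comm]
  exact Finset.sum_congr rfl fun _ _ => Finset.sum_congr rfl fun _ _ => by ring

lemma mul_sum_le_add_abs_add_of_sum_sub_le {ι : Type*} (I : Finset ι) {r e : ι → ℝ}
    (i₀ : ι) {n B : ℝ} (hI : (#I : ℝ) = n) (hn : 0 < n)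
    (h : ∑ i ∈ I, (r i - e i) ≤ n * B) :
    1 / n * ∑ i ∈ I, r i ≤ e i₀ + |1 / n * ∑ i ∈ I, (e i₀ - e i)| + B := by
  have hsplit : 1 / n * ∑ i ∈ I, r i
      = 1 / n * ∑ i ∈ I, (r i - e i) + e i₀ - 1 / n * ∑ i ∈ I, (e i₀ - e i) := by
    simp only [Finset.sum_sub_distrib, Finset.sum_const, nsmul_eq_mul, hI]
    field_simp
    ring
  have hB : 1 / n * ∑ i ∈ I, (r i - e i) ≤ B := by
    rw [div_mul_eq_mul_div, one_mul, div_le_iff₀ hn, mul_comm]; exact h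
  linarith [neg_abs_le (1 / n * ∑ i ∈ I, (e i₀ - e i))]

theorem lrfu_discrepancy_step_general
    {Ω : Type*} [mΩ : MeasurableSpace Ω] (μ : Measure Ω) [IsProbabilityMeasure μ]
    {N : ℕ} (L : Fin N → ℝ) (Cap : ℝ)
    (F : Filtration ℕ mΩ)
    (D : Fin N → ℕ → Ω → ℝ)
    (hDmeas : ∀ f t, Measurable[F t] (D f t))
    (Hmax : ℝ)
    (hHmax : ∀ t, ∀ r ∈ cacheSet N L Cap,
      ∀ᵐ ω ∂μ, 0 ≤ hitRate L (fun f => D f t) (fun _ => r) ω ∧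
        hitRate L (fun f => D f t) (fun _ => r) ω ≤ Hmax)
    (t τ : ℕ) (hτ0 : 0 < τ) (hτt : τ < t)
    (q : Fin N → ℝ) (hq : q ∈ cacheSet N L Cap)
    (δ : ℝ) (hδ : δ ∈ Set.Ioo (0 : ℝ) 1) :
    ENNReal.ofReal (1 - δ) ≤
      μ {ω |
        (∑ f, q f * ((1 / (τ : ℝ)) * ∑ s ∈ Finset.Ico (t - τ) t, D f s ω) * L f)
          ≤ (μ[hitRate L (fun f => D f t) (fun _ => q) | F (t - 1)]) ω
            + |(1 / (τ : ℝ)) * ∑ s ∈ Finset.Ico (t - τ) t,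
                ((μ[hitRate L (fun f => D f t) (fun _ => q) | F (t - 1)]) ω
                  - (μ[hitRate L (fun f => D f s) (fun _ => q) | F (s - 1)]) ω)|
            + Hmax * Real.sqrt (2 * Real.log (1 / δ) / (τ : ℝ))} := by
  set R : ℕ → Ω → ℝ := fun s => hitRate L (fun f => D f s) (fun _ => q)
  have hR (s : ℕ) : Measurable[F s] (R s) :=
    Finset.measurable_sum _ fun f _ => ((hDmeas f s).mul_const _).mul_const _
  have hH : 0 ≤ Hmax := by
    obtain ⟨ω, h0, h1⟩ := (hHmax t q hq).exists
    linarith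
  have hX (s : ℕ) : Measurable[F s] (R s - μ[R s|F (s - 1)]) :=
    (hR s).sub (stronglyMeasurable_condExp.mono (F.mono (Nat.sub_le s 1))).measurable
  have hXbd (s : ℕ) : ∀ᵐ ω ∂μ, |R s ω - μ[R s|F (s - 1)] ω| ≤ Hmax.toNNReal := by
    simpa [hH] using abs_sub_condExp_le_of_mem_Icc (F.le (s - 1))
      ((hR s).mono (F.le s) le_rfl).aestronglyMeasurable (hHmax s q hq)
  have hXce (s : ℕ) : μ[R s - μ[R s|F (s - 1)]|F (s - 1)] =ᵐ[μ] 0 :=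
    condExp_sub_condExp_ae_eq_zero (F.le _)
      (Integrable.of_mem_Icc 0 Hmax ((hR s).mono (F.le s) le_rfl).aemeasurable (hHmax s q hq))
  have hconf := (hasSubgaussianMGF_sum_Ico_of_condExp_eq_zero hX hXbd hXce (t - τ) τ)
    |>.ofReal_one_sub_le_measure_le hδ.1 hδ.2.le
  rw [Nat.sub_add_cancel hτt.le] at hconf
  refine hconf.trans (measure_mono fun ω hω => ?_)
  simp only [Set.mem_ofPred_eq, Pi.sub_apply] at hω
  rw [Set.mem_ofPred_eq, ← mul_sum_hitRate]
  refine mul_sum_le_add_abs_add_of_sum_sub_le _ t (by simp [Nat.sub_sub_self hτt.le])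
    (by positivity) (hω.trans_eq ?_)
  rw [NNReal.coe_mul, NNReal.coe_pow, Real.coe_toNNReal _ hH, NNReal.coe_natCast,
    ← mul_assoc (τ : ℝ), ← sqrt_sq (by positivity : (0 : ℝ) ≤ τ * Hmax),
    ← sqrt_mul (by positivity)]
  congr 1
  field_simp

/-- For a fixed strategy `q` in the cache set, with probability at least `1 - delta`,
the windowed-average empirical hit rate is bounded by the conditional expected hit
rate at time `t`, plus the uniform-weight discrepancy of `q` across the window, plus
`H_max * sqrt(2 log(1/delta)/tau)`. -/
theorem lrfu_discrepancy_step
    {Ω : Type*} [mΩ : MeasurableSpace Ω] (μ : Measure Ω) [IsProbabilityMeasure μ]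
    {N : ℕ} (L : Fin N → ℝ) (hL : ∀ f, 0 < L f) (Cap : ℝ) (hCap : 0 < Cap)
    (F : Filtration ℕ mΩ)
    (D : Fin N → ℕ → Ω → ℝ)
    (hD0 : ∀ f t ω, 0 ≤ D f t ω)
    (hDmeas : ∀ f t, Measurable[F t] (D f t))
    (Hmax : ℝ)
    (hHmax : ∀ t, ∀ r ∈ cacheSet N L Cap,
      ∀ᵐ ω ∂μ, 0 ≤ hitRate L (fun f => D f t) (fun _ => r) ω ∧
        hitRate L (fun f => D f t) (fun _ => r) ω ≤ Hmax)
    (t τ : ℕ) (hτ0 : 0 < τ) (hτt : τ < t)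
    (q : Fin N → ℝ) (hq : q ∈ cacheSet N L Cap)
    (δ : ℝ) (hδ : δ ∈ Set.Ioo (0 : ℝ) 1) :
    ENNReal.ofReal (1 - δ) ≤
      μ {ω |
        (∑ f, q f * ((1 / (τ : ℝ)) * ∑ s ∈ Finset.Ico (t - τ) t, D f s ω) * L f)
          ≤ (μ[hitRate L (fun f => D f t) (fun _ => q) | F (t - 1)]) ω
            + |(1 / (τ : ℝ)) * ∑ s ∈ Finset.Ico (t - τ) t,
                ((μ[hitRate L (fun f => D f t) (fun _ => q) | F (t - 1)]) ω
                  - (μ[hitRate L (fun f => D f s) (fun _ => q) | F (s - 1)]) ω)|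
            + Hmax * Real.sqrt (2 * Real.log (1 / δ) / (τ : ℝ))} :=
  lrfu_discrepancy_step_general (mΩ := mΩ) μ L Cap F D hDmeas Hmax hHmax t τ hτ0 hτt q hq δ hδ
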